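/- With x̃₁ = (A_k^T A_k + λI)^{-1} A_k^T b and x̂₁ = (A_k^T A_k + λI)^{-1} A^T b, the Pythagorean identity ||x̂₁||_2^2 = ||x̃₁||_2^2 + λ^{-2}||Â_k^T b||_2^2 holds; in particular ||x̃₁||_2 ≤ ||x̂₁||_2. -/

import Mathlib

open Matrix

/-- Euclidean (ℓ2) norm of a finite real vector. -/
noncomputable def enorm₂ {n : ℕ} (v : Fin n → ℝ) : ℝ :=
  Real.sqrt (∑ i, v i ^ 2)

/-!
Since `A_k Â_kᵀ = 0`, the ridge matrix `M = A_kᵀA_k + λI` acts as `λ` on the columns of `Â_kᵀ`,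
so `x̂₁ = M⁻¹(A_kᵀ + Â_kᵀ)b = x̃₁ + λ⁻¹ Â_kᵀ b`. The two summands are orthogonal: `M⁻¹` is
symmetric, so `⟪M⁻¹A_kᵀb, Â_kᵀb⟫ = λ⁻¹⟪A_kᵀb, Â_kᵀb⟫ = λ⁻¹⟪b, A_k Â_kᵀ b⟫ = 0`.
-/

lemma enorm₂_nonneg {n : ℕ} (v : Fin n → ℝ) : 0 ≤ enorm₂ v := Real.sqrt_nonneg _

lemma enorm₂_sq {n : ℕ} (v : Fin n → ℝ) : enorm₂ v ^ 2 = v ⬝ᵥ v := by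
  rw [enorm₂, Real.sq_sqrt (Finset.sum_nonneg fun i _ => sq_nonneg _)]
  simp only [dotProduct, sq]

lemma enorm₂_add_smul_sq_of_dotProduct_eq_zero {n : ℕ} {x y : Fin n → ℝ} (hxy : x ⬝ᵥ y = 0)
    (c : ℝ) : enorm₂ (x + c • y) ^ 2 = enorm₂ x ^ 2 + c ^ 2 * enorm₂ y ^ 2 := by
  have hyx : y ⬝ᵥ x = 0 := by rw [dotProduct_comm, hxy]
  simp only [enorm₂_sq, dotProduct_add, add_dotProduct, smul_dotProduct, dotProduct_smul, hxy,
    hyx, smul_eq_mul, mul_zero, add_zero, zero_add]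
  ring

section Ridge

variable {m n : Type*} [Fintype m]

lemma transpose_mulVec_dotProduct_eq_zero_of_mul_transpose_eq_zero [Fintype n]
    {B E : Matrix m n ℝ} (hBE : B * Eᵀ = 0) (b c : m → ℝ) : (Eᵀ *ᵥ b) ⬝ᵥ (Bᵀ *ᵥ c) = 0 := by
  rw [dotProduct_mulVec, vecMul_transpose, mulVec_mulVec, hBE, zero_mulVec, zero_dotProduct]

lemma transpose_transpose_mul_self_add_smul_one [DecidableEq n] (B : Matrix m n ℝ) (lam : ℝ) :
    (Bᵀ * B + lam • 1)ᵀ = Bᵀ * B + lam • 1 := by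
  simp only [transpose_add, transpose_mul, transpose_transpose, transpose_smul, transpose_one]

lemma isUnit_det_transpose_mul_self_add_smul_one [Fintype n] [DecidableEq n]
    (B : Matrix m n ℝ) {lam : ℝ} (hlam : 0 < lam) :
    IsUnit (Bᵀ * B + lam • 1).det := by
  have hBB : (Bᵀ * B).PosSemidef := by
    simpa only [conjTranspose_eq_transpose_of_trivial] using posSemidef_conjTranspose_mul_self B
  exact ((PosDef.posSemidef_add hBB (PosDef.one.smul hlam)).isUnit).map detMonoidHom

lemma transpose_mul_self_add_smul_one_inv_mul_of_mul_transpose_eq_zero [Fintype n] [DecidableEq n]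
    {B E : Matrix m n ℝ} (hBE : B * Eᵀ = 0) {lam : ℝ} (hlam : 0 < lam) :
    (Bᵀ * B + lam • 1)⁻¹ * Eᵀ = lam⁻¹ • Eᵀ := by
  set M := Bᵀ * B + lam • (1 : Matrix n n ℝ) with hM
  have hME : M * Eᵀ = lam • Eᵀ := by
    rw [hM, Matrix.add_mul, Matrix.mul_assoc, hBE, Matrix.mul_zero, zero_add, smul_mul,
      Matrix.one_mul]
  calc M⁻¹ * Eᵀ = lam⁻¹ • (M⁻¹ * (M * Eᵀ)) := by
        rw [hME, Matrix.mul_smul, smul_smul, inv_mul_cancel₀ hlam.ne', one_smul]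
    _ = lam⁻¹ • Eᵀ := by
        rw [nonsing_inv_mul_cancel_left _ _ (isUnit_det_transpose_mul_self_add_smul_one B hlam)]

lemma ridge_dotProduct_eq_zero_of_mul_transpose_eq_zero [Fintype n] [DecidableEq n]
    {B E : Matrix m n ℝ} (hBE : B * Eᵀ = 0) {lam : ℝ} (hlam : 0 < lam) (b : m → ℝ) :
    ((Bᵀ * B + lam • 1)⁻¹ *ᵥ (Bᵀ *ᵥ b)) ⬝ᵥ (Eᵀ *ᵥ b) = 0 := by
  set M := Bᵀ * B + lam • (1 : Matrix n n ℝ)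
  have hMinv : M⁻¹ᵀ = M⁻¹ := by
    rw [transpose_nonsing_inv, transpose_transpose_mul_self_add_smul_one]
  rw [dotProduct_comm, dotProduct_mulVec, ← mulVec_transpose, hMinv, mulVec_mulVec,
    transpose_mul_self_add_smul_one_inv_mul_of_mul_transpose_eq_zero hBE hlam, smul_mulVec,
    smul_dotProduct, transpose_mulVec_dotProduct_eq_zero_of_mul_transpose_eq_zero hBE, smul_zero]

end Ridge

theorem enorm₂_ridge_add_sq {m n : ℕ} {B E : Matrix (Fin m) (Fin n) ℝ} (hBE : B * Eᵀ = 0)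
    {lam : ℝ} (hlam : 0 < lam) (b : Fin m → ℝ) :
    enorm₂ ((Bᵀ * B + lam • 1)⁻¹ *ᵥ ((B + E)ᵀ *ᵥ b)) ^ 2 =
      enorm₂ ((Bᵀ * B + lam • 1)⁻¹ *ᵥ (Bᵀ *ᵥ b)) ^ 2 + lam⁻¹ ^ 2 * enorm₂ (Eᵀ *ᵥ b) ^ 2 := by
  rw [transpose_add, add_mulVec, mulVec_add, mulVec_mulVec b _ Eᵀ,
    transpose_mul_self_add_smul_one_inv_mul_of_mul_transpose_eq_zero hBE hlam, smul_mulVec,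
    enorm₂_add_smul_sq_of_dotProduct_eq_zero
      (ridge_dotProduct_eq_zero_of_mul_transpose_eq_zero hBE hlam b)]

theorem stmt14_general (m n k l : ℕ)
    (Uk : Matrix (Fin m) (Fin k) ℝ) (Vk : Matrix (Fin n) (Fin k) ℝ)
    (Uh : Matrix (Fin m) (Fin l) ℝ) (Vh : Matrix (Fin n) (Fin l) ℝ)
    (σ : Fin k → ℝ) (τ : Fin l → ℝ)
    (hVO : Vkᵀ * Vh = 0)
    (lam : ℝ) (hlam : 0 < lam)
    (A : Matrix (Fin m) (Fin n) ℝ)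
    (hA : A = Uk * Matrix.diagonal σ * Vkᵀ + Uh * Matrix.diagonal τ * Vhᵀ)
    (Ak : Matrix (Fin m) (Fin n) ℝ)
    (hAk : Ak = Uk * Matrix.diagonal σ * Vkᵀ)
    (b : Fin m → ℝ) :
    (enorm₂ (((Akᵀ * Ak + lam • (1 : Matrix (Fin n) (Fin n) ℝ))⁻¹).mulVec (Aᵀ.mulVec b))) ^ 2 =
      (enorm₂ (((Akᵀ * Ak + lam • (1 : Matrix (Fin n) (Fin n) ℝ))⁻¹).mulVec (Akᵀ.mulVec b))) ^ 2 +
        lam⁻¹ ^ 2 * (enorm₂ ((A - Ak)ᵀ.mulVec b)) ^ 2 ∧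
    enorm₂ (((Akᵀ * Ak + lam • (1 : Matrix (Fin n) (Fin n) ℝ))⁻¹).mulVec (Akᵀ.mulVec b)) ≤
      enorm₂ (((Akᵀ * Ak + lam • (1 : Matrix (Fin n) (Fin n) ℝ))⁻¹).mulVec (Aᵀ.mulVec b)) := by
  have hAAk : Ak * (A - Ak)ᵀ = 0 := by
    rw [hA, hAk, add_sub_cancel_left]
    simp only [transpose_mul, transpose_transpose, Matrix.mul_assoc, ← Matrix.mul_assoc Vkᵀ, hVO,
      Matrix.zero_mul, Matrix.mul_zero]
  have hpyth := enorm₂_ridge_add_sq hAAk hlam b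
  rw [add_sub_cancel] at hpyth
  refine ⟨hpyth, (pow_le_pow_iff_left₀ (enorm₂_nonneg _) (enorm₂_nonneg _) two_ne_zero).mp ?_⟩
  rw [hpyth]
  exact le_add_of_nonneg_right (by positivity)

/-- With `x̃₁ = (A_kᵀA_k + λI)⁻¹ A_kᵀ b` and `x̂₁ = (A_kᵀA_k + λI)⁻¹ Aᵀ b`,
the Pythagorean identity `‖x̂₁‖₂² = ‖x̃₁‖₂² + λ⁻²‖Â_kᵀ b‖₂²` holds, where
`Â_k = A - A_k`; in particular `‖x̃₁‖₂ ≤ ‖x̂₁‖₂`. -/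
theorem stmt14 (m n k l : ℕ)
    (Uk : Matrix (Fin m) (Fin k) ℝ) (Vk : Matrix (Fin n) (Fin k) ℝ)
    (Uh : Matrix (Fin m) (Fin l) ℝ) (Vh : Matrix (Fin n) (Fin l) ℝ)
    (σ : Fin k → ℝ) (τ : Fin l → ℝ)
    (hσ : ∀ s, 0 < σ s) (hτ : ∀ s, 0 < τ s)
    (hUk : Ukᵀ * Uk = 1) (hVk : Vkᵀ * Vk = 1)
    (hUO : Ukᵀ * Uh = 0) (hVO : Vkᵀ * Vh = 0)
    (lam : ℝ) (hlam : 0 < lam)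
    (A : Matrix (Fin m) (Fin n) ℝ)
    (hA : A = Uk * Matrix.diagonal σ * Vkᵀ + Uh * Matrix.diagonal τ * Vhᵀ)
    (Ak : Matrix (Fin m) (Fin n) ℝ)
    (hAk : Ak = Uk * Matrix.diagonal σ * Vkᵀ)
    (b : Fin m → ℝ) :
    (enorm₂ (((Akᵀ * Ak + lam • (1 : Matrix (Fin n) (Fin n) ℝ))⁻¹).mulVec (Aᵀ.mulVec b))) ^ 2 =
      (enorm₂ (((Akᵀ * Ak + lam • (1 : Matrix (Fin n) (Fin n) ℝ))⁻¹).mulVec (Akᵀ.mulVec b))) ^ 2 +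
        lam⁻¹ ^ 2 * (enorm₂ ((A - Ak)ᵀ.mulVec b)) ^ 2 ∧
    enorm₂ (((Akᵀ * Ak + lam • (1 : Matrix (Fin n) (Fin n) ℝ))⁻¹).mulVec (Akᵀ.mulVec b)) ≤
      enorm₂ (((Akᵀ * Ak + lam • (1 : Matrix (Fin n) (Fin n) ℝ))⁻¹).mulVec (Aᵀ.mulVec b)) :=
  stmt14_general m n k l Uk Vk Uh Vh σ τ hVO lam hlam A hA Ak hAk b
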